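/- arXiv:2201.12132 — 5 statements merged into one kernel-verified Lean document; each statement's English description precedes it below -/
import Mathlib

section
/- Let f : [0,∞) → ℝ be a C² function and let α, β, γ be positive real constants such that |f''(t) + α f'(t)| ≤ γ e^{-βt} for all t ≥ 0. Then f(t) has a finite limit f_∞ as t → +∞, and for all t ≥ 0 one has: if β < α then |f'(t)| ≤ (|f'(0)| + γ/(α−β)) e^{-βt} and |f(t) − f_∞| ≤ (|f'(0)| + γ/(α−β)) e^{-βt}/β; if β = α then |f'(t)| ≤ (|f'(0)| + γ t) e^{-αt} and |f(t) − f_∞| ≤ (α|f'(0)| + γ(αt+1)) e^{-αt}/α²; if β > α then |f'(t)| ≤ (|f'(0)| + γ/(β−α)) e^{-αt} and |f(t) − f_∞| ≤ (|f'(0)| + γ/(β−α)) e^{-αt}/α. -/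
/-!
Multiplying by the integrating factor `e^{α t}` gives `(e^{α t} f')' = e^{α t} (f'' + α f')`, so
`e^{α t} |f'(t)| ≤ |f'(0)| + γ ∫₀ᵗ e^{(α - β) s} ds`; evaluating this integral in the three cases
gives the decay of `f'`. In each case `|f'(s)|` is dominated by an integrable envelope
`(C + d s) e^{-b s}`, so `f` has a limit `f_∞` and `|f t - f_∞| ≤ ∫_t^∞ |f'|`.
-/

open Real Filter MeasureTheory Set Topology

lemma tendsto_linear_mul_exp_neg_atTop {b : ℝ} (hb : 0 < b) (p q : ℝ) :
    Tendsto (fun s => (p + q * s) * exp (-b * s)) atTop (𝓝 0) := by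
  have hexp : Tendsto (fun s => exp (-b * s)) atTop (𝓝 0) := by
    simpa [Function.comp_def] using
      tendsto_exp_neg_atTop_nhds_zero.comp (tendsto_id.const_mul_atTop hb)
  have hmul : Tendsto (fun s => b * s * exp (-b * s)) atTop (𝓝 0) := by
    simpa [Function.comp_def] using
      (tendsto_pow_mul_exp_neg_atTop_nhds_zero 1).comp (tendsto_id.const_mul_atTop hb)
  have := (hexp.const_mul p).add (hmul.const_mul (q / b))
  simp only [mul_zero, add_zero] at this
  refine this.congr fun s => ?_
  field_simp

lemma hasDerivAt_linear_mul_exp_neg {b : ℝ} (hb : b ≠ 0) (C d s : ℝ) :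
    HasDerivAt (fun u => (-(C / b + d / b ^ 2) + -(d / b) * u) * exp (-b * u))
      ((C + d * s) * exp (-b * s)) s := by
  have hlin : HasDerivAt (fun u => -(C / b + d / b ^ 2) + -(d / b) * u) (-(d / b)) s := by
    simpa using ((hasDerivAt_id s).const_mul (-(d / b))).const_add (-(C / b + d / b ^ 2))
  have hexp : HasDerivAt (fun u => exp (-b * u)) (exp (-b * s) * -b) s := by
    simpa using ((hasDerivAt_id s).const_mul (-b)).exp
  refine (hlin.mul hexp).congr_deriv ?_
  field_simp
  ring

section LinearTimesExp

variable {b C d t : ℝ} (hb : 0 < b) (hC : 0 ≤ C) (hd : 0 ≤ d) (ht : 0 ≤ t)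
include hb hC hd ht

lemma integrableOn_Ioi_linear_mul_exp_neg :
    IntegrableOn (fun s => (C + d * s) * exp (-b * s)) (Ioi t) := by
  refine integrableOn_Ioi_deriv_of_nonneg' (fun s _ => hasDerivAt_linear_mul_exp_neg hb.ne' C d s)
    (fun s hs => ?_) (tendsto_linear_mul_exp_neg_atTop hb _ _)
  have : 0 ≤ s := ht.trans hs.le
  positivity

lemma integral_Ioi_linear_mul_exp_neg :
    ∫ s in Ioi t, (C + d * s) * exp (-b * s) = ((C + d * t) / b + d / b ^ 2) * exp (-b * t) := by
  rw [integral_Ioi_of_hasDerivAt_of_tendsto' (fun s _ => hasDerivAt_linear_mul_exp_neg hb.ne' C d s)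
    (integrableOn_Ioi_linear_mul_exp_neg hb hC hd ht)
    (tendsto_linear_mul_exp_neg_atTop hb _ _)]
  ring

end LinearTimesExp

/-- The bound is `∫_t^∞ (C + d s) e^{-b s} ds`. -/
theorem exists_tendsto_abs_sub_le_of_abs_deriv_le {f g : ℝ → ℝ} {b C d : ℝ}
    (hf : ∀ s, HasDerivAt f (g s) s) (hb : 0 < b) (hC : 0 ≤ C) (hd : 0 ≤ d)
    (hbound : ∀ s ≥ 0, |g s| ≤ (C + d * s) * exp (-b * s)) :
    ∃ L, Tendsto f atTop (𝓝 L) ∧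
      ∀ t ≥ 0, |f t - L| ≤ ((C + d * t) / b + d / b ^ 2) * exp (-b * t) := by
  have hg : Measurable g := by
    simpa [funext fun s => (hf s).deriv] using measurable_deriv f
  have hbound_ae : ∀ t ≥ 0, ∀ᵐ s ∂(volume.restrict (Ioi t)), ‖g s‖ ≤ (C + d * s) * exp (-b * s) :=
    fun t ht => (ae_restrict_mem measurableSet_Ioi).mono fun s hs =>
      hbound s (ht.trans hs.le)
  have hint : ∀ t ≥ 0, IntegrableOn g (Ioi t) := fun t ht =>
    (integrableOn_Ioi_linear_mul_exp_neg hb hC hd ht).mono' hg.aestronglyMeasurable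
      (hbound_ae t ht)
  have hL := tendsto_limUnder_of_hasDerivAt_of_integrableOn_Ioi (fun s _ => hf s) (hint 0 le_rfl)
  refine ⟨_, hL, fun t ht => ?_⟩
  calc |f t - limUnder atTop f| = ‖∫ s in Ioi t, g s‖ := by
        rw [integral_Ioi_of_hasDerivAt_of_tendsto' (fun s _ => hf s) (hint t ht) hL,
          Real.norm_eq_abs, abs_sub_comm]
    _ ≤ ∫ s in Ioi t, (C + d * s) * exp (-b * s) :=
        norm_integral_le_of_norm_le (integrableOn_Ioi_linear_mul_exp_neg hb hC hd ht)
          (hbound_ae t ht)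
    _ = _ := integral_Ioi_linear_mul_exp_neg hb hC hd ht

/-- Variation of constants as an inequality, from `(e^{α s} g)' = e^{α s} (g' + α g)`. -/
theorem exp_mul_abs_le_of_abs_deriv_add_mul_le {g g' h H : ℝ → ℝ} {α t : ℝ}
    (hg : ∀ s, HasDerivAt g (g' s) s) (hH : ∀ s, HasDerivAt H (exp (α * s) * h s) s)
    (hbound : ∀ s ≥ 0, |g' s + α * g s| ≤ h s) (ht : 0 ≤ t) :
    exp (α * t) * |g t| ≤ |g 0| + (H t - H 0) := by
  have hφ : ∀ s, HasDerivAt (fun u => exp (α * u) * g u) (exp (α * s) * (g' s + α * g s)) s := by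
    intro s
    have hexp : HasDerivAt (fun u => exp (α * u)) (exp (α * s) * α) s := by
      simpa using ((hasDerivAt_id s).const_mul α).exp
    exact (hexp.mul (hg s)).congr_deriv (by ring)
  have := image_norm_le_of_norm_deriv_right_le_deriv_boundary
    (f := fun u => exp (α * u) * g u) (B := fun u => |g 0| + (H u - H 0))
    (fun s _ => (hφ s).continuousAt.continuousWithinAt) (fun s _ => (hφ s).hasDerivWithinAt)
    (by simp) (fun s => ((hH s).sub_const (H 0)).const_add |g 0|)
    (fun s hs => by
      rw [Real.norm_eq_abs, abs_mul, abs_exp]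
      exact mul_le_mul_of_nonneg_left (hbound s hs.1) (exp_pos _).le)
    ⟨ht, le_rfl⟩
  simpa [abs_mul] using this

section DampedDecay

variable {g g' : ℝ → ℝ} {α β γ : ℝ} (hg : ∀ s, HasDerivAt g (g' s) s)
  (hode : ∀ s ≥ 0, |g' s + α * g s| ≤ γ * exp (-β * s))
include hg hode

lemma exp_mul_abs_le_of_ne (hαβ : α ≠ β) {t : ℝ} (ht : 0 ≤ t) :
    exp (α * t) * |g t| ≤ |g 0| + γ / (α - β) * (exp ((α - β) * t) - 1) := by
  have hsub : α - β ≠ 0 := sub_ne_zero.mpr hαβ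
  have hH : ∀ s, HasDerivAt (fun u => γ / (α - β) * exp ((α - β) * u))
      (exp (α * s) * (γ * exp (-β * s))) s := by
    intro s
    have := (((hasDerivAt_id s).const_mul (α - β)).exp).const_mul (γ / (α - β))
    refine this.congr_deriv ?_
    rw [mul_left_comm _ γ, ← exp_add, id, mul_one]
    field_simp
    ring_nf
  have := exp_mul_abs_le_of_abs_deriv_add_mul_le hg hH hode ht
  simp only [mul_zero, exp_zero] at this
  linarith

lemma abs_le_exp_neg_of_lt (hβα : β < α) (hγ : 0 ≤ γ) {t : ℝ} (ht : 0 ≤ t) :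
    |g t| ≤ (|g 0| + γ / (α - β)) * exp (-β * t) := by
  have hc : 0 ≤ γ / (α - β) := div_nonneg hγ (sub_pos.mpr hβα).le
  have hE : 1 ≤ exp ((α - β) * t) := one_le_exp (mul_nonneg (sub_pos.mpr hβα).le ht)
  refine le_of_mul_le_mul_left ?_ (exp_pos (α * t))
  calc exp (α * t) * |g t| ≤ |g 0| + γ / (α - β) * (exp ((α - β) * t) - 1) :=
        exp_mul_abs_le_of_ne hg hode hβα.ne' ht
    _ ≤ (|g 0| + γ / (α - β)) * exp ((α - β) * t) := by nlinarith [abs_nonneg (g 0)]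
    _ = exp (α * t) * ((|g 0| + γ / (α - β)) * exp (-β * t)) := by
        rw [mul_left_comm, ← exp_add]
        ring_nf

lemma abs_le_exp_neg_of_gt (hαβ : α < β) (hγ : 0 ≤ γ) {t : ℝ} (ht : 0 ≤ t) :
    |g t| ≤ (|g 0| + γ / (β - α)) * exp (-α * t) := by
  have hc : 0 ≤ γ / (β - α) := div_nonneg hγ (sub_pos.mpr hαβ).le
  have hE : 0 < exp ((α - β) * t) := exp_pos _
  refine le_of_mul_le_mul_left ?_ (exp_pos (α * t))
  calc exp (α * t) * |g t| ≤ |g 0| + γ / (α - β) * (exp ((α - β) * t) - 1) :=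
        exp_mul_abs_le_of_ne hg hode hαβ.ne ht
    _ = |g 0| + γ / (β - α) * (1 - exp ((α - β) * t)) := by
        rw [← neg_sub β α, div_neg]
        ring
    _ ≤ |g 0| + γ / (β - α) := by nlinarith
    _ = exp (α * t) * ((|g 0| + γ / (β - α)) * exp (-α * t)) := by
        rw [mul_left_comm, ← exp_add]
        simp

end DampedDecay

lemma abs_le_exp_neg_of_eq {g g' : ℝ → ℝ} {α γ : ℝ} (hg : ∀ s, HasDerivAt g (g' s) s)
    (hode : ∀ s ≥ 0, |g' s + α * g s| ≤ γ * exp (-α * s)) {t : ℝ} (ht : 0 ≤ t) :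
    |g t| ≤ (|g 0| + γ * t) * exp (-α * t) := by
  have hH : ∀ s, HasDerivAt (fun u => γ * u) (exp (α * s) * (γ * exp (-α * s))) s := by
    intro s
    refine ((hasDerivAt_id s).const_mul γ).congr_deriv ?_
    rw [mul_left_comm, ← exp_add]
    simp
  have := exp_mul_abs_le_of_abs_deriv_add_mul_le hg hH hode ht
  refine le_of_mul_le_mul_left ?_ (exp_pos (α * t))
  rw [mul_left_comm, ← exp_add]
  simpa using this

/-- Lemma 1.2 of the paper: if `f` is `C²` on `[0,∞)` and `|f'' + α f'| ≤ γ e^{-βt}`,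
then `f` converges at infinity and `f'`, `f - f_∞` decay with explicit rates and
constants, depending on the relative position of `β` and `α`. -/
theorem stmt0 (f : ℝ → ℝ) (hf : ContDiff ℝ 2 f)
    (α β γ : ℝ) (hα : 0 < α) (hβ : 0 < β) (hγ : 0 < γ)
    (hode : ∀ t ≥ (0:ℝ), |deriv (deriv f) t + α * deriv f t| ≤ γ * Real.exp (-β * t)) :
    ∃ finfty : ℝ, Tendsto f atTop (nhds finfty) ∧
      ∀ t ≥ (0:ℝ),
        (β < α →
          |deriv f t| ≤ (|deriv f 0| + γ / (α - β)) * Real.exp (-β * t) ∧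
          |f t - finfty| ≤ (|deriv f 0| + γ / (α - β)) * Real.exp (-β * t) / β) ∧
        (β = α →
          |deriv f t| ≤ (|deriv f 0| + γ * t) * Real.exp (-α * t) ∧
          |f t - finfty| ≤ (α * |deriv f 0| + γ * (α * t + 1)) * Real.exp (-α * t) / α ^ 2) ∧
        (α < β →
          |deriv f t| ≤ (|deriv f 0| + γ / (β - α)) * Real.exp (-α * t) ∧
          |f t - finfty| ≤ (|deriv f 0| + γ / (β - α)) * Real.exp (-α * t) / α) := by
  have hf' : ∀ s, HasDerivAt f (deriv f s) s := fun s =>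
    (hf.differentiable (by norm_num) s).hasDerivAt
  have hf'' : ∀ s, HasDerivAt (deriv f) (deriv (deriv f) s) s := fun s =>
    (hf.differentiable_deriv_two s).hasDerivAt
  rcases lt_trichotomy β α with hβα | rfl | hαβ
  · have hC : 0 ≤ |deriv f 0| + γ / (α - β) :=
      add_nonneg (abs_nonneg _) (div_pos hγ (sub_pos.mpr hβα)).le
    obtain ⟨L, hL, hdist⟩ := exists_tendsto_abs_sub_le_of_abs_deriv_le hf' hβ hC le_rfl
      fun s hs => by simpa using abs_le_exp_neg_of_lt hf'' hode hβα hγ.le hs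
    refine ⟨L, hL, fun t ht => ⟨fun _ => ⟨abs_le_exp_neg_of_lt hf'' hode hβα hγ.le ht, ?_⟩,
      fun h => absurd h hβα.ne, fun h => absurd h hβα.not_gt⟩⟩
    exact (hdist t ht).trans_eq (by ring)
  · obtain ⟨L, hL, hdist⟩ := exists_tendsto_abs_sub_le_of_abs_deriv_le hf' hβ (abs_nonneg _)
      hγ.le fun s hs => abs_le_exp_neg_of_eq hf'' hode hs
    refine ⟨L, hL, fun t ht => ⟨fun h => absurd h (lt_irrefl β),
      fun _ => ⟨abs_le_exp_neg_of_eq hf'' hode ht, (hdist t ht).trans_eq ?_⟩,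
      fun h => absurd h (lt_irrefl β)⟩⟩
    field_simp
    ring
  · have hC : 0 ≤ |deriv f 0| + γ / (β - α) :=
      add_nonneg (abs_nonneg _) (div_pos hγ (sub_pos.mpr hαβ)).le
    obtain ⟨L, hL, hdist⟩ := exists_tendsto_abs_sub_le_of_abs_deriv_le hf' hα hC le_rfl
      fun s hs => by simpa using abs_le_exp_neg_of_gt hf'' hode hαβ hγ.le hs
    refine ⟨L, hL, fun t ht => ⟨fun h => absurd h hαβ.not_gt, fun h => absurd h hαβ.ne',
      fun _ => ⟨abs_le_exp_neg_of_gt hf'' hode hαβ hγ.le ht, ?_⟩⟩⟩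
    exact (hdist t ht).trans_eq (by ring)
end

section
/- Let σ : [0,∞) → ℝ be a locally Lipschitz function and let C, a > 0 be constants such that for almost every t ≥ 0 (with respect to Lebesgue measure), σ is differentiable at t and σ'(t) ≤ −σ(t)² + 1 + C e^{-at}. Then there exists a constant C' > 0 depending only on C and a such that for all t ≥ 0: σ(t) ≤ 1 + (σ(0) + C')·ρ(t), where ρ(t) = e^{-at} if 0 < a < 2, ρ(t) = (t+1)e^{-2t} if a = 2, and ρ(t) = e^{-2t} if a > 2. -/
/-!
With the integrating factor `e^{2t}` and `-σ² + 2σ - 1 ≤ 0`, the inequality gives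
`(e^{2t} (σ - 1))' ≤ C e^{(2-a)t}` almost everywhere; since locally Lipschitz functions are
absolutely continuous, integrating yields
`σ t - 1 ≤ e^{-2t} (σ 0 - 1) + C max 1 |2-a|⁻¹ ρ(t)` with `ρ = decayProfile a`.
It remains to bound `σ 0 ≥ -√(1+C)`. Otherwise `σ` decreases, so `σ' ≤ 1 + C - σ² ≤ -δ σ²` with
`δ > 0`, and `1/σ` increases at rate at least `δ` while staying negative: `σ` would blow up in
finite time.
-/

open Real MeasureTheory Set Filter

theorem LocallyLipschitz.absolutelyContinuousOnInterval {X : Type*} [PseudoMetricSpace X]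
    {f : ℝ → X} (hf : LocallyLipschitz f) (a b : ℝ) : AbsolutelyContinuousOnInterval f a b := by
  obtain ⟨K, hK⟩ := hf.locallyLipschitzOn.exists_lipschitzOnWith_of_compact isCompact_uIcc
  exact hK.absolutelyContinuousOnInterval

namespace AbsolutelyContinuousOnInterval

variable {f g : ℝ → ℝ} {a b : ℝ}

theorem sub_le_integral_of_ae_deriv_le (hf : AbsolutelyContinuousOnInterval f a b) (hab : a ≤ b)
    (hg : IntervalIntegrable g volume a b) (h : ∀ᵐ x, x ∈ Ioo a b → deriv f x ≤ g x) :
    f b - f a ≤ ∫ x in a..b, g x := by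
  rw [← hf.integral_deriv_eq_sub]
  refine intervalIntegral.integral_mono_ae_restrict hab hf.intervalIntegrable_deriv hg ?_
  rw [EventuallyLE, ← Measure.restrict_congr_set Ioo_ae_eq_Icc]
  exact (ae_restrict_iff' measurableSet_Ioo).2 h

theorem integral_le_sub_of_ae_le_deriv (hf : AbsolutelyContinuousOnInterval f a b) (hab : a ≤ b)
    (hg : IntervalIntegrable g volume a b) (h : ∀ᵐ x, x ∈ Ioo a b → g x ≤ deriv f x) :
    ∫ x in a..b, g x ≤ f b - f a := by
  rw [← hf.integral_deriv_eq_sub]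
  refine intervalIntegral.integral_mono_ae_restrict hab hg hf.intervalIntegrable_deriv ?_
  rw [EventuallyLE, ← Measure.restrict_congr_set Ioo_ae_eq_Icc]
  exact (ae_restrict_iff' measurableSet_Ioo).2 h

end AbsolutelyContinuousOnInterval

theorem LipschitzOnWith.inv_of_le_abs {α : Type*} [PseudoMetricSpace α] {f : α → ℝ}
    {K c : NNReal} {s : Set α} (hf : LipschitzOnWith K f s) (hc : 0 < c)
    (hfs : ∀ x ∈ s, (c : ℝ) ≤ |f x|) :
    LipschitzOnWith (K / c ^ 2) (fun x => (f x)⁻¹) s := by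
  refine LipschitzOnWith.of_dist_le_mul fun x hx y hy => ?_
  have hx0 : f x ≠ 0 := abs_pos.1 ((NNReal.coe_pos.2 hc).trans_le (hfs x hx))
  have hy0 : f y ≠ 0 := abs_pos.1 ((NNReal.coe_pos.2 hc).trans_le (hfs y hy))
  have hcc : (c : ℝ) ^ 2 ≤ ‖f x‖ * ‖f y‖ := by
    rw [sq]; exact mul_le_mul (hfs x hx) (hfs y hy) c.2 (abs_nonneg _)
  rw [dist_inv_inv₀ hx0 hy0, NNReal.coe_div, NNReal.coe_pow, div_mul_eq_mul_div,
    div_le_div_iff₀ (by positivity) (by positivity)]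
  calc dist (f x) (f y) * (c : ℝ) ^ 2 ≤ (K * dist x y) * (‖f x‖ * ‖f y‖) :=
        mul_le_mul (hf.dist_le_mul x hx y hy) hcc (by positivity) (by positivity)
    _ = _ := by ring

namespace LocallyLipschitz

theorem le_of_ae_deriv_nonpos_below {f : ℝ → ℝ} {a t θ : ℝ} (hf : LocallyLipschitz f)
    (h : ∀ᵐ x, a ≤ x → f x < θ → deriv f x ≤ 0) (ha : f a < θ) (hat : a ≤ t) : f t ≤ f a := by
  by_contra! hlt
  set L := min θ (f t)
  have hL : f a < L := lt_min ha hlt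
  -- `T` is the first time after `a` at which `f` reaches the level `L`.
  set S := Icc a t ∩ f ⁻¹' Ici L
  have hS : IsClosed S := isClosed_Icc.inter (isClosed_Ici.preimage hf.continuous)
  have hTS : sInf S ∈ S :=
    hS.csInf_mem ⟨t, ⟨hat, le_rfl⟩, show L ≤ f t from min_le_right _ _⟩ ⟨a, fun _ hu => hu.1.1⟩
  set T := sInf S
  have hbelow : ∀ u ∈ Ico a T, f u < L := fun u hu => by
    by_contra! hu'
    exact (csInf_le ⟨a, fun _ hv => hv.1.1⟩
      (show u ∈ S from ⟨⟨hu.1, hu.2.le.trans hTS.1.2⟩, hu'⟩)).not_gt hu.2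
  have hdecr : f T - f a ≤ ∫ _ in a..T, (0 : ℝ) := by
    refine (hf.absolutelyContinuousOnInterval a T).sub_le_integral_of_ae_deriv_le hTS.1.1
      intervalIntegrable_const ?_
    filter_upwards [h] with x hx hxT
    exact hx hxT.1.le ((hbelow x ⟨hxT.1.le, hxT.2⟩).trans_le (min_le_left _ _))
  have : L ≤ f T := hTS.2
  simp only [intervalIntegral.integral_zero] at hdecr
  linarith

theorem neg_le_of_ae_deriv_le_sq_sub_sq {σ : ℝ → ℝ} {R : ℝ} (hσ : LocallyLipschitz σ)
    (hR : 0 ≤ R) (h : ∀ᵐ t, 0 ≤ t → DifferentiableAt ℝ σ t ∧ deriv σ t ≤ R ^ 2 - σ t ^ 2) :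
    -R ≤ σ 0 := by
  by_contra! hlt
  set c := σ 0
  have hc : c < 0 := by linarith
  have hRc : R ^ 2 < c ^ 2 := by nlinarith
  have hle : ∀ t ≥ 0, σ t ≤ c := fun t ht =>
    hσ.le_of_ae_deriv_nonpos_below (h.mono fun x hx hx0 hxR => (hx hx0).2.trans (by nlinarith))
      hlt ht
  set δ := 1 - R ^ 2 / c ^ 2
  have hδ : 0 < δ := by
    rw [sub_pos, div_lt_one (by nlinarith)]; exact hRc
  -- By time `T`, `1/σ` would have grown by `-1/σ 0`, i.e. become nonnegative.
  set T := -c⁻¹ / δ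
  have hT : 0 ≤ T := div_nonneg (by simp [hc.le]) hδ.le
  have hinv : AbsolutelyContinuousOnInterval (fun t => (σ t)⁻¹) 0 T := by
    obtain ⟨K, hK⟩ := hσ.locallyLipschitzOn.exists_lipschitzOnWith_of_compact
      (isCompact_uIcc (a := 0) (b := T))
    refine (hK.inv_of_le_abs (c := ‖c‖₊) (by simpa using hc.ne) fun x hx => ?_)
      |>.absolutelyContinuousOnInterval
    rw [uIcc_of_le hT] at hx
    simpa using abs_le_abs_of_nonpos hc.le (hle x hx.1)
  have hderiv : ∀ᵐ x, x ∈ Ioo 0 T → δ ≤ deriv (fun t => (σ t)⁻¹) x := by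
    filter_upwards [h] with x hx hxT
    obtain ⟨hd, hdσ⟩ := hx hxT.1.le
    have hσx := hle x hxT.1.le
    rw [(hd.hasDerivAt.fun_inv (by linarith)).deriv, le_div_iff₀ (by nlinarith)]
    have : R ^ 2 ≤ R ^ 2 / c ^ 2 * σ x ^ 2 := by
      rw [div_mul_eq_mul_div, le_div_iff₀ (by nlinarith)]
      exact mul_le_mul_of_nonneg_left (by nlinarith) (sq_nonneg R)
    nlinarith
  have hgrowth := hinv.integral_le_sub_of_ae_le_deriv hT intervalIntegrable_const hderiv
  have hσT : (σ T)⁻¹ < 0 := inv_lt_zero.2 ((hle T hT).trans_lt hc)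
  rw [intervalIntegral.integral_const, smul_eq_mul, sub_zero, div_mul_cancel₀ _ hδ.ne']
    at hgrowth
  linarith

theorem sub_one_le_exp_neg_two_mul {σ g : ℝ → ℝ} (hσ : LocallyLipschitz σ) (hg : Continuous g)
    (h : ∀ᵐ x, 0 ≤ x → DifferentiableAt ℝ σ x ∧ deriv σ x ≤ -σ x ^ 2 + 1 + g x)
    {t : ℝ} (ht : 0 ≤ t) :
    σ t - 1 ≤ exp (-2 * t) * (σ 0 - 1 + ∫ x in 0..t, exp (2 * x) * g x) := by
  set w := fun u => exp (2 * u) * (σ u - 1)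
  have hexp : ∀ x, HasDerivAt (fun u => exp (2 * u)) (2 * exp (2 * x)) x := fun x => by
    simpa [mul_comm] using ((hasDerivAt_id x).const_mul 2).exp
  have hw : AbsolutelyContinuousOnInterval w 0 t :=
    (ContDiffOn.absolutelyContinuousOnInterval (by fun_prop)).fun_mul
      ((hσ.absolutelyContinuousOnInterval 0 t).fun_sub
        ((LocallyLipschitz.const 1).absolutelyContinuousOnInterval 0 t))
  have hderiv : ∀ᵐ x, x ∈ Ioo 0 t → deriv w x ≤ exp (2 * x) * g x := by
    filter_upwards [h] with x hx hxt
    obtain ⟨hd, hdσ⟩ := hx hxt.1.le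
    rw [((hexp x).fun_mul (hd.hasDerivAt.sub_const 1)).deriv]
    have hpos := exp_pos (2 * x)
    -- `w' = e^{2x} (σ' + 2σ - 2) ≤ e^{2x} (g - (σ - 1)²)`
    nlinarith [mul_nonneg hpos.le (sq_nonneg (σ x - 1))]
  have hint := hw.sub_le_integral_of_ae_deriv_le ht
    ((by fun_prop : Continuous _).intervalIntegrable _ _) hderiv
  have hw0 : w 0 = σ 0 - 1 := by simp [w]
  have hwt : σ t - 1 = exp (-2 * t) * w t := by
    simp only [w, ← mul_assoc, ← exp_add]; simp
  rw [hwt]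
  exact mul_le_mul_of_nonneg_left (by linarith) (exp_pos _).le

end LocallyLipschitz

theorem integral_exp_mul_eq {b : ℝ} (hb : b ≠ 0) (t : ℝ) :
    ∫ x in (0:ℝ)..t, exp (b * x) = (exp (b * t) - 1) / b := by
  rw [intervalIntegral.integral_comp_mul_left (fun x => exp x) hb, integral_exp]
  simp [div_eq_inv_mul]

noncomputable def decayProfile (a t : ℝ) : ℝ :=
  if a < 2 then exp (-a * t) else if a = 2 then (t + 1) * exp (-2 * t) else exp (-2 * t)

theorem exp_neg_two_mul_le_decayProfile (a : ℝ) {t : ℝ} (ht : 0 ≤ t) :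
    exp (-2 * t) ≤ decayProfile a t := by
  unfold decayProfile
  split_ifs with h2 h2'
  · exact exp_le_exp.2 (by nlinarith)
  · exact le_mul_of_one_le_left (exp_pos _).le (by linarith)
  · exact le_rfl

/-- At `a = 2` the factor `|2 - a|⁻¹` is the junk value `0`; the `max` with `1` covers it. -/
theorem exp_neg_two_mul_mul_integral_exp_le (a : ℝ) {t : ℝ} (ht : 0 ≤ t) :
    exp (-2 * t) * ∫ x in 0..t, exp ((2 - a) * x) ≤ max 1 |2 - a|⁻¹ * decayProfile a t := by
  unfold decayProfile
  rcases lt_trichotomy a 2 with h2 | rfl | h2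
  · rw [if_pos h2, integral_exp_mul_eq (by linarith), abs_of_pos (by linarith)]
    have : exp (-2 * t) * exp ((2 - a) * t) = exp (-a * t) := by rw [← exp_add]; ring_nf
    calc exp (-2 * t) * ((exp ((2 - a) * t) - 1) / (2 - a))
        = (exp (-a * t) - exp (-2 * t)) * (2 - a)⁻¹ := by rw [← this]; ring
      _ ≤ exp (-a * t) * (2 - a)⁻¹ :=
        mul_le_mul_of_nonneg_right (by linarith [exp_pos (-2 * t)]) (by simp [h2.le])
      _ ≤ _ := by rw [mul_comm]; gcongr; exact le_max_right _ _
  · simp only [lt_irrefl, if_false, if_true, sub_self, zero_mul, exp_zero,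
      intervalIntegral.integral_const, smul_eq_mul, mul_one, sub_zero]
    calc exp (-2 * t) * t ≤ 1 * ((t + 1) * exp (-2 * t)) := by nlinarith [exp_pos (-2 * t)]
      _ ≤ _ := mul_le_mul_of_nonneg_right (le_max_left _ _) (by positivity)
  · rw [if_neg (by linarith), if_neg (by linarith), integral_exp_mul_eq (by linarith),
      abs_of_neg (by linarith)]
    have : exp ((2 - a) * t) ≤ 1 := exp_le_one_iff.2 (by nlinarith)
    calc exp (-2 * t) * ((exp ((2 - a) * t) - 1) / (2 - a))
        = (1 - exp ((2 - a) * t)) * (-(2 - a))⁻¹ * exp (-2 * t) := by field_simp; ring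
      _ ≤ 1 * (-(2 - a))⁻¹ * exp (-2 * t) := by
        gcongr
        · simp [h2.le]
        · linarith [exp_pos ((2 - a) * t)]
      _ ≤ _ := by rw [one_mul]; gcongr; exact le_max_right _ _

/-- Lemma 1.3 of the paper: a locally Lipschitz function `σ` satisfying the Riccati-type
differential inequality `σ' ≤ -σ² + 1 + C e^{-at}` almost everywhere on `[0,∞)` satisfies
`σ(t) ≤ 1 + (σ(0) + C') ρ(t)` for a constant `C' > 0` depending only on `C` and `a`. -/
theorem stmt1 (C a : ℝ) (hC : 0 < C) (ha : 0 < a) :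
    ∃ C' > (0:ℝ), ∀ σ : ℝ → ℝ, LocallyLipschitz σ →
      (∀ᵐ t ∂(volume.restrict (Set.Ici (0:ℝ))),
        DifferentiableAt ℝ σ t ∧ deriv σ t ≤ -σ t ^ 2 + 1 + C * Real.exp (-a * t)) →
      ∀ t ≥ (0:ℝ), σ t ≤ 1 + (σ 0 + C') *
        (if a < 2 then Real.exp (-a * t)
         else if a = 2 then (t + 1) * Real.exp (-2 * t)
         else Real.exp (-2 * t)) := by
  refine ⟨√(1 + C) + C * max 1 |2 - a|⁻¹, by positivity, fun σ hσ hae t ht => ?_⟩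
  have hA := (ae_restrict_iff' measurableSet_Ici).1 hae
  have hσ0 : -√(1 + C) ≤ σ 0 := by
    refine hσ.neg_le_of_ae_deriv_le_sq_sub_sq (sqrt_nonneg _) <| hA.mono fun x hx hx0 => ?_
    have : exp (-a * x) ≤ 1 := exp_le_one_iff.2 (by nlinarith)
    refine ⟨(hx hx0).1, (hx hx0).2.trans ?_⟩
    rw [sq_sqrt (by positivity)]
    nlinarith
  have hσt := hσ.sub_one_le_exp_neg_two_mul (by fun_prop) hA ht
  have hint : ∫ x in 0..t, exp (2 * x) * (C * exp (-a * x)) =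
      C * ∫ x in 0..t, exp ((2 - a) * x) := by
    rw [← intervalIntegral.integral_const_mul]
    congr 1 with x
    rw [mul_left_comm, ← exp_add]
    ring_nf
  rw [hint] at hσt
  have hI := mul_le_mul_of_nonneg_left (exp_neg_two_mul_mul_integral_exp_le a ht) hC.le
  have hρ := mul_le_mul_of_nonneg_left (exp_neg_two_mul_le_decayProfile a ht)
    (by linarith : 0 ≤ σ 0 + √(1 + C))
  change σ t ≤ 1 + (σ 0 + _) * decayProfile a t
  nlinarith [exp_pos (-2 * t), sqrt_nonneg (1 + C)]
end

section
/- Let N ≥ 1 be an integer, let η⁰, η¹, …, η^N : [0,∞) → ℝ be C² functions, and let u^i_k : [0,∞) → ℝ (for i,k ∈ {0,…,N}) be continuous functions such that (η⁰)''(r) + 2(η⁰)'(r) = Σ_{k=0}^{N} u⁰_k(r) η^k(r) and, for each j ∈ {1,…,N}, (η^j)''(r) + (η^j)'(r) = Σ_{k=0}^{N} u^j_k(r) η^k(r), for all r ≥ 0. Set u(r) = max_{i,k ∈ {0,…,N}} |u^i_k(r)|. Then for all r ≥ 0: Σ_{i=0}^{N} |η^i(r)| ≤ (Σ_{i=0}^{N}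 (|η^i(0)| + |(η^i)'(0)|)) · exp((N+1) ∫₀^r u(s) ds). -/
/-!
Write `ζᵢ = (ηⁱ)'` and `fᵢ = ∑ₖ uⁱₖ ηᵏ`. Each `ζᵢ` solves `ζᵢ' + cᵢ ζᵢ = fᵢ` with damping
`cᵢ ≥ 1`, so by variation of constants `∑ |ζᵢ|` is bounded by the solution `D` of
`D' + D = F`, `D 0 = ∑ |ζᵢ 0|`, where `F = ∑ |fᵢ| ≤ (N + 1) u A` and `A = ∑ |ηⁱ|`.
Integrating, `A ≤ A 0 + ∫ D`; since `D + ∫ D = D 0 + ∫ F`, the sum `A + D` satisfies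
`A + D ≤ A 0 + D 0 + ∫ (N + 1) u (A + D)`, and Grönwall's inequality concludes.
-/

open Real

theorem le_mul_exp_integral_of_le_add_integral {φ K : ℝ → ℝ} {a : ℝ} (hφ : Continuous φ)
    (hK : Continuous K) (hK0 : ∀ s ≥ 0, 0 ≤ K s)
    (h : ∀ r ≥ 0, φ r ≤ a + ∫ s in (0:ℝ)..r, K s * φ s) {r : ℝ} (hr : 0 ≤ r) :
    φ r ≤ a * exp (∫ s in (0:ℝ)..r, K s) := by
  set Ψ : ℝ → ℝ := fun r => a + ∫ s in (0:ℝ)..r, K s * φ s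
  set I : ℝ → ℝ := fun r => ∫ s in (0:ℝ)..r, K s
  have hE : ∀ x, HasDerivAt (fun x => Ψ x * exp (-I x)) (K x * (φ x - Ψ x) * exp (-I x)) x := by
    intro x
    refine ((((hK.mul hφ).integral_hasStrictDerivAt 0 x).hasDerivAt.const_add a).fun_mul
      (hK.integral_hasStrictDerivAt 0 x).hasDerivAt.fun_neg.exp).congr_deriv ?_
    simp only [Pi.mul_apply, Ψ, I]
    ring
  -- `Ψ e^{-I}` decreases because `Ψ' = K φ ≤ K Ψ`
  have hanti : AntitoneOn (fun x => Ψ x * exp (-I x)) (Set.Ici 0) := by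
    have hdiff : Differentiable ℝ (fun x => Ψ x * exp (-I x)) := fun x => (hE x).differentiableAt
    refine antitoneOn_of_deriv_nonpos (convex_Ici 0) hdiff.continuous.continuousOn
      hdiff.differentiableOn fun x hx => ?_
    rw [interior_Ici] at hx
    rw [(hE x).deriv]
    exact mul_nonpos_of_nonpos_of_nonneg
      (mul_nonpos_of_nonneg_of_nonpos (hK0 x hx.le) (sub_nonpos.2 (h x hx.le))) (exp_nonneg _)
  have hΨ : Ψ r * exp (-I r) ≤ a := by
    simpa [Ψ, I] using hanti Set.self_mem_Ici hr hr
  calc φ r ≤ Ψ r := h r hr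
    _ = Ψ r * exp (-I r) * exp (I r) := by rw [mul_assoc, ← exp_add]; simp
    _ ≤ a * exp (I r) := by gcongr

noncomputable def dampedSolution (c b : ℝ) (F : ℝ → ℝ) (r : ℝ) : ℝ :=
  exp (-(c * r)) * (b + ∫ s in (0:ℝ)..r, exp (c * s) * F s)

section dampedSolution

variable {c b : ℝ} {F : ℝ → ℝ}

theorem hasDerivAt_dampedSolution (hF : Continuous F) (r : ℝ) :
    HasDerivAt (dampedSolution c b F) (F r - c * dampedSolution c b F r) r := by
  have hI := ((show Continuous fun s => exp (c * s) * F s by fun_prop).integral_hasStrictDerivAt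
    0 r).hasDerivAt.const_add b
  have he : HasDerivAt (fun s => exp (-(c * s))) (exp (-(c * r)) * (-(c * 1))) r :=
    ((hasDerivAt_id' r).const_mul c).neg.exp
  refine (he.fun_mul hI).congr_deriv ?_
  have hexp : exp (c * r) * exp (-(c * r)) = 1 := by rw [← exp_add, add_neg_cancel, exp_zero]
  rw [dampedSolution]
  linear_combination F r * hexp

theorem continuous_dampedSolution (hF : Continuous F) : Continuous (dampedSolution c b F) :=
  continuous_iff_continuousAt.2 fun r => (hasDerivAt_dampedSolution hF r).continuousAt

theorem dampedSolution_zero : dampedSolution c b F 0 = b := by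
  simp [dampedSolution]

theorem dampedSolution_add_mul_integral (hF : Continuous F) (r : ℝ) :
    dampedSolution c b F r + c * ∫ s in (0:ℝ)..r, dampedSolution c b F s =
      b + ∫ s in (0:ℝ)..r, F s := by
  have hD := continuous_dampedSolution (c := c) (b := b) hF
  have hftc := intervalIntegral.integral_eq_sub_of_hasDerivAt (a := 0) (b := r)
    (f := dampedSolution c b F) (f' := fun s => F s - c * dampedSolution c b F s)
    (fun s _ => hasDerivAt_dampedSolution hF s)
    ((by fun_prop : Continuous fun s => F s - c * dampedSolution c b F s).intervalIntegrable _ _)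
  rw [intervalIntegral.integral_sub (hF.intervalIntegrable _ _)
    ((by fun_prop : Continuous fun s => c * dampedSolution c b F s).intervalIntegrable _ _),
    intervalIntegral.integral_const_mul,
    dampedSolution_zero] at hftc
  linarith

theorem dampedSolution_nonneg (hb : 0 ≤ b) (hF : ∀ s, 0 ≤ F s) {r : ℝ} (hr : 0 ≤ r) :
    0 ≤ dampedSolution c b F r :=
  mul_nonneg (exp_nonneg _) (add_nonneg hb (intervalIntegral.integral_nonneg hr
    fun s _ => mul_nonneg (exp_nonneg _) (hF s)))

theorem dampedSolution_le_of_le {c' : ℝ} (hc : c' ≤ c) (hb : 0 ≤ b) (hF : Continuous F)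
    (hF0 : ∀ s, 0 ≤ F s) {r : ℝ} (hr : 0 ≤ r) :
    dampedSolution c b F r ≤ dampedSolution c' b F r := by
  rw [dampedSolution, dampedSolution, mul_add, mul_add, ← intervalIntegral.integral_const_mul,
    ← intervalIntegral.integral_const_mul]
  refine add_le_add ?_ ?_
  · exact mul_le_mul_of_nonneg_right (exp_le_exp.2 (by nlinarith)) hb
  · refine intervalIntegral.integral_mono_on hr (Continuous.intervalIntegrable (by fun_prop) _ _)
      (Continuous.intervalIntegrable (by fun_prop) _ _) fun s hs => ?_
    rw [← mul_assoc, ← mul_assoc, ← exp_add, ← exp_add]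
    exact mul_le_mul_of_nonneg_right (exp_le_exp.2 (by nlinarith [hs.2])) (hF0 s)

theorem abs_dampedSolution_le {r : ℝ} (hr : 0 ≤ r) :
    |dampedSolution c b F r| ≤ dampedSolution c |b| (fun s => |F s|) r := by
  rw [dampedSolution, dampedSolution, abs_mul, abs_of_pos (exp_pos _)]
  gcongr
  calc |b + ∫ s in (0:ℝ)..r, exp (c * s) * F s|
      ≤ |b| + ∫ s in (0:ℝ)..r, |exp (c * s) * F s| :=
        (abs_add_le _ _).trans (add_le_add_right (intervalIntegral.abs_integral_le_integral_abs hr) _)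
    _ = |b| + ∫ s in (0:ℝ)..r, exp (c * s) * |F s| := by
        simp only [abs_mul, abs_of_pos (exp_pos _)]

theorem sum_dampedSolution {ι : Type*} (t : Finset ι) (b : ι → ℝ) {F : ι → ℝ → ℝ}
    (hF : ∀ i, Continuous (F i)) (r : ℝ) :
    ∑ i ∈ t, dampedSolution c (b i) (F i) r =
      dampedSolution c (∑ i ∈ t, b i) (fun s => ∑ i ∈ t, F i s) r := by
  simp only [dampedSolution, ← Finset.mul_sum, Finset.sum_add_distrib]
  congr 2
  rw [← intervalIntegral.integral_finsetSum fun i _ =>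
    (by fun_prop : Continuous fun s => exp (c * s) * F i s).intervalIntegrable _ _]
  simp only [Finset.mul_sum]

theorem eq_dampedSolution {ζ f : ℝ → ℝ} (hf : Continuous f)
    (hζ : ∀ s ≥ 0, HasDerivAt ζ (f s - c * ζ s) s) {r : ℝ} (hr : 0 ≤ r) :
    ζ r = dampedSolution c (ζ 0) f r := by
  have hftc := intervalIntegral.integral_eq_sub_of_hasDerivAt
    (f := fun s => exp (c * s) * ζ s) (f' := fun s => exp (c * s) * f s) (a := 0) (b := r)
    (fun s hs => by
      rw [Set.uIcc_of_le hr] at hs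
      exact (((hasDerivAt_id' s).const_mul c).exp.fun_mul (hζ s hs.1)).congr_deriv (by ring))
    ((by fun_prop : Continuous fun s => exp (c * s) * f s).intervalIntegrable _ _)
  have hexp : exp (-(c * r)) * exp (c * r) = 1 := by rw [← exp_add, neg_add_cancel, exp_zero]
  rw [dampedSolution, hftc, mul_zero, exp_zero, one_mul]
  linear_combination (-ζ r) * hexp

end dampedSolution

theorem abs_le_abs_add_integral_abs_deriv {g g' : ℝ → ℝ} (hg : ∀ s, HasDerivAt g (g' s) s)
    (hg' : Continuous g') {r : ℝ} (hr : 0 ≤ r) :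
    |g r| ≤ |g 0| + ∫ s in (0:ℝ)..r, |g' s| := by
  have hftc : ∫ s in (0:ℝ)..r, g' s = g r - g 0 :=
    intervalIntegral.integral_eq_sub_of_hasDerivAt (fun s _ => hg s) (hg'.intervalIntegrable _ _)
  calc |g r| = |g 0 + ∫ s in (0:ℝ)..r, g' s| := by rw [hftc, add_sub_cancel]
    _ ≤ |g 0| + ∫ s in (0:ℝ)..r, |g' s| :=
      (abs_add_le _ _).trans (add_le_add_right (intervalIntegral.abs_integral_le_integral_abs hr) _)

theorem sum_abs_sum_mul_le {ι : Type*} [Fintype ι] {a : ι → ι → ℝ} {m : ℝ}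
    (ha : ∀ i k, |a i k| ≤ m) (x : ι → ℝ) :
    ∑ i, |∑ k, a i k * x k| ≤ Fintype.card ι * m * ∑ k, |x k| := by
  have hrow : ∀ i, |∑ k, a i k * x k| ≤ m * ∑ k, |x k| := fun i =>
    calc |∑ k, a i k * x k| ≤ ∑ k, |a i k| * |x k| := by
          simpa only [abs_mul] using Finset.abs_sum_le_sum_abs (fun k => a i k * x k) Finset.univ
      _ ≤ ∑ k, m * |x k| := by gcongr; exact ha i _
      _ = m * ∑ k, |x k| := (Finset.mul_sum _ _ _).symm
  calc ∑ i, |∑ k, a i k * x k| ≤ ∑ _i : ι, m * ∑ k, |x k| := Finset.sum_le_sum fun i _ => hrow i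
    _ = Fintype.card ι * m * ∑ k, |x k| := by
        rw [Finset.sum_const, Finset.card_univ, nsmul_eq_mul, mul_assoc]

theorem continuous_ciSup_of_fintype {ι : Type*} [Fintype ι] [Nonempty ι] {f : ι → ℝ → ℝ}
    (hf : ∀ i, Continuous (f i)) : Continuous fun s => ⨆ i, f i s := by
  simp only [← Finset.sup'_univ_eq_ciSup]
  exact Continuous.finset_sup'_apply Finset.univ_nonempty fun i _ => hf i

theorem abs_deriv_le_dampedSolution {g f : ℝ → ℝ} {c : ℝ} (hc : 1 ≤ c) (hg : ContDiff ℝ 2 g)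
    (hf : Continuous f) (hode : ∀ r ≥ 0, deriv (deriv g) r + c * deriv g r = f r)
    {r : ℝ} (hr : 0 ≤ r) :
    |deriv g r| ≤ dampedSolution 1 |deriv g 0| (fun s => |f s|) r := by
  have hg' : ∀ s ≥ 0, HasDerivAt (deriv g) (f s - c * deriv g s) s := fun s hs => by
    rw [← hode s hs, add_sub_cancel_right]
    exact (hg.differentiable_deriv_two s).hasDerivAt
  calc |deriv g r| = |dampedSolution c (deriv g 0) f r| := by rw [← eq_dampedSolution hf hg' hr]
    _ ≤ dampedSolution c |deriv g 0| (fun s => |f s|) r := abs_dampedSolution_le hr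
    _ ≤ _ := dampedSolution_le_of_le hc (abs_nonneg _) hf.abs (fun _ => abs_nonneg _) hr

theorem le_mul_exp_integral_of_le_add_integral_dampedSolution {A F K : ℝ → ℝ} {b : ℝ}
    (hA : Continuous A) (hF : Continuous F) (hK : Continuous K) (hK0 : ∀ s ≥ 0, 0 ≤ K s)
    (hb : 0 ≤ b) (hF0 : ∀ s, 0 ≤ F s) (hFA : ∀ s, F s ≤ K s * A s)
    (hAD : ∀ r ≥ 0, A r ≤ A 0 + ∫ s in (0:ℝ)..r, dampedSolution 1 b F s) {r : ℝ} (hr : 0 ≤ r) :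
    A r ≤ (A 0 + b) * exp (∫ s in (0:ℝ)..r, K s) := by
  set D : ℝ → ℝ := dampedSolution 1 b F
  have hDc : Continuous D := continuous_dampedSolution hF
  have hD0 : ∀ s ≥ 0, 0 ≤ D s := fun s hs => dampedSolution_nonneg hb hF0 hs
  -- `D + ∫ D = b + ∫ F` turns the bound on `A` into a Grönwall inequality for `A + D`
  have hsum : ∀ s ≥ 0, A s + D s ≤ (A 0 + b) + ∫ t in (0:ℝ)..s, K t * (A t + D t) :=
      fun s hs => by
    have hFKAD : ∫ t in (0:ℝ)..s, F t ≤ ∫ t in (0:ℝ)..s, K t * (A t + D t) :=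
      intervalIntegral.integral_mono_on hs (hF.intervalIntegrable _ _)
        (Continuous.intervalIntegrable (by fun_prop) _ _) fun t ht =>
          (hFA t).trans (mul_le_mul_of_nonneg_left (le_add_of_nonneg_right (hD0 t ht.1))
            (hK0 t ht.1))
    linarith [hAD s hs, dampedSolution_add_mul_integral (c := 1) (b := b) hF s]
  calc A r ≤ A r + D r := le_add_of_nonneg_right (hD0 r hr)
    _ ≤ (A 0 + b) * exp (∫ s in (0:ℝ)..r, K s) :=
      le_mul_exp_integral_of_le_add_integral (hA.add hDc) hK hK0 hsum hr

theorem sum_abs_le_mul_exp_integral {ι : Type*} [Fintype ι] [Nonempty ι] {η : ι → ℝ → ℝ}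
    {u : ι → ι → ℝ → ℝ} {c : ι → ℝ} {M : ℝ → ℝ} (hη : ∀ i, ContDiff ℝ 2 (η i))
    (hu : ∀ i k, Continuous (u i k)) (hM : Continuous M) (huM : ∀ i k s, |u i k s| ≤ M s)
    (hc : ∀ i, 1 ≤ c i)
    (hode : ∀ i, ∀ r ≥ 0, deriv (deriv (η i)) r + c i * deriv (η i) r = ∑ k, u i k r * η k r)
    {r : ℝ} (hr : 0 ≤ r) :
    ∑ i, |η i r| ≤ (∑ i, (|η i 0| + |deriv (η i) 0|)) *
      exp (Fintype.card ι * ∫ s in (0:ℝ)..r, M s) := by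
  obtain ⟨i₀⟩ := ‹Nonempty ι›
  have hηc : ∀ i, Continuous (η i) := fun i => (hη i).continuous
  have hη'c : ∀ i, Continuous (deriv (η i)) := fun i => (hη i).continuous_deriv one_le_two
  have hf : ∀ i, Continuous fun s => ∑ k, u i k s * η k s := fun i => by fun_prop
  set F : ℝ → ℝ := fun s => ∑ i, |∑ k, u i k s * η k s|
  have hFc : Continuous F := by fun_prop
  have hη' : ∀ s ≥ 0, ∑ i, |deriv (η i) s| ≤ dampedSolution 1 (∑ i, |deriv (η i) 0|) F s :=
      fun s hs =>
    calc ∑ i, |deriv (η i) s|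
        ≤ ∑ i, dampedSolution 1 |deriv (η i) 0| (fun t => |∑ k, u i k t * η k t|) s :=
          Finset.sum_le_sum fun i _ =>
            abs_deriv_le_dampedSolution (hc i) (hη i) (hf i) (hode i) hs
      _ = dampedSolution 1 (∑ i, |deriv (η i) 0|) F s :=
          sum_dampedSolution _ _ (fun i => (hf i).abs) s
  have hA : ∀ s ≥ 0, ∑ i, |η i s| ≤
      ∑ i, |η i 0| + ∫ t in (0:ℝ)..s, dampedSolution 1 (∑ i, |deriv (η i) 0|) F t := fun s hs =>
    calc ∑ i, |η i s| ≤ ∑ i, (|η i 0| + ∫ t in (0:ℝ)..s, |deriv (η i) t|) :=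
          Finset.sum_le_sum fun i _ => abs_le_abs_add_integral_abs_deriv
            (fun t => ((hη i).differentiable two_ne_zero t).hasDerivAt) (hη'c i) hs
      _ = ∑ i, |η i 0| + ∫ t in (0:ℝ)..s, ∑ i, |deriv (η i) t| := by
          rw [Finset.sum_add_distrib, intervalIntegral.integral_finsetSum fun i _ =>
            (hη'c i).abs.intervalIntegrable _ _]
      _ ≤ _ := by
          gcongr
          exact intervalIntegral.integral_mono_on hs
            (Continuous.intervalIntegrable (by fun_prop) _ _)
            ((continuous_dampedSolution hFc).intervalIntegrable _ _) fun t ht => hη' t ht.1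
  rw [← intervalIntegral.integral_const_mul, Finset.sum_add_distrib]
  exact le_mul_exp_integral_of_le_add_integral_dampedSolution (by fun_prop) hFc (by fun_prop)
    (fun s _ => mul_nonneg (Nat.cast_nonneg _) ((abs_nonneg _).trans (huM i₀ i₀ s)))
    (by positivity) (fun _ => by positivity)
    (fun s => sum_abs_sum_mul_le (fun i k => huM i k s) _) hA hr

theorem stmt3_general (N : ℕ)
    (η : Fin (N + 1) → ℝ → ℝ) (hη : ∀ i, ContDiff ℝ 2 (η i))
    (u : Fin (N + 1) → Fin (N + 1) → ℝ → ℝ) (hu : ∀ i k, Continuous (u i k))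
    (hode0 : ∀ r ≥ (0:ℝ),
      deriv (deriv (η 0)) r + 2 * deriv (η 0) r = ∑ k, u 0 k r * η k r)
    (hodej : ∀ j : Fin (N + 1), j ≠ 0 → ∀ r ≥ (0:ℝ),
      deriv (deriv (η j)) r + deriv (η j) r = ∑ k, u j k r * η k r) :
    ∀ r ≥ (0:ℝ), ∑ i, |η i r| ≤ (∑ i, (|η i 0| + |deriv (η i) 0|)) *
      Real.exp (((N : ℝ) + 1) * ∫ s in (0:ℝ)..r, ⨆ i, ⨆ k, |u i k s|) := by
  intro r hr
  have hM : Continuous fun s => ⨆ i, ⨆ k, |u i k s| :=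
    continuous_ciSup_of_fintype fun i => continuous_ciSup_of_fintype fun k => (hu i k).abs
  have huM : ∀ i k s, |u i k s| ≤ ⨆ i, ⨆ k, |u i k s| := fun i k s =>
    (le_ciSup (Finite.bddAbove_range _) k).trans
      (le_ciSup (f := fun i => ⨆ k, |u i k s|) (Finite.bddAbove_range _) i)
  have hode : ∀ i, ∀ r ≥ (0:ℝ), deriv (deriv (η i)) r +
      (if i = 0 then 2 else 1) * deriv (η i) r = ∑ k, u i k r * η k r := by
    intro i r hr
    split_ifs with hi
    · subst hi
      exact hode0 r hr
    · rw [one_mul]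
      exact hodej i hi r hr
  have := sum_abs_le_mul_exp_integral hη hu hM huM (fun i => by split_ifs <;> norm_num) hode hr
  rwa [Fintype.card_fin, Nat.cast_add_one] at this

/-- Lemma 3.6 of the paper (Grönwall estimate for the Jacobi system): the solutions of the
second order linear system `(η⁰)'' + 2(η⁰)' = Σ u⁰_k η^k`, `(η^j)'' + (η^j)' = Σ u^j_k η^k`
satisfy `Σ |η^i(r)| ≤ (Σ (|η^i(0)| + |(η^i)'(0)|)) exp((N+1) ∫₀^r u)` where
`u(r) = max_{i,k} |u^i_k(r)|`. -/
theorem stmt3 (N : ℕ) (hN : 1 ≤ N)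
    (η : Fin (N + 1) → ℝ → ℝ) (hη : ∀ i, ContDiff ℝ 2 (η i))
    (u : Fin (N + 1) → Fin (N + 1) → ℝ → ℝ) (hu : ∀ i k, Continuous (u i k))
    (hode0 : ∀ r ≥ (0:ℝ),
      deriv (deriv (η 0)) r + 2 * deriv (η 0) r = ∑ k, u 0 k r * η k r)
    (hodej : ∀ j : Fin (N + 1), j ≠ 0 → ∀ r ≥ (0:ℝ),
      deriv (deriv (η j)) r + deriv (η j) r = ∑ k, u j k r * η k r) :
    ∀ r ≥ (0:ℝ), ∑ i, |η i r| ≤ (∑ i, (|η i 0| + |deriv (η i) 0|)) *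
      Real.exp (((N : ℝ) + 1) * ∫ s in (0:ℝ)..r, ⨆ i, ⨆ k, |u i k s|) :=
  stmt3_general N η hη u hu hode0 hodej
end

section
/- Let m > 1 and K > 0 be real constants, let h : [0,∞) → ℝ be continuous with |h(r)| ≤ K e^{(2−m)r} for all r ≥ 0, and let f : [0,∞) → ℝ be a C² function satisfying f''(r) − f(r) = h(r) for all r ≥ 0. Then the quantity α := (1/2)·(f(0) + f'(0) + ∫₀^∞ e^{-s} h(s) ds) is well defined (the integral converges absolutely), and there exists a constant c > 0 depending only on K, m, |f(0)| and |f'(0)| such that for all r ≥ 0: |f(r) − α e^{r}| ≤ c·ρ(r), where ρ(r) = e^{(2−m)r} if 1 < m < 3, ρ(r) = (r+1)e^{-r} if m = 3, and ρ(r) = e^{-r} if m > 3. -/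
/-!
With `g = f' + f` the equation reads `(e^{-t} g)' = e^{-t} h`, so `e^{-t} g(t) = 2α - R(t)` with the
tail `R(t) = ∫_t^∞ e^{-s} h(s) ds = O(e^{(1-m)t})`. Hence `(e^t (f - α e^t))' = e^t (g - 2α e^t)` is
`O(e^{(3-m)t})`, and integrating from `0` gives
`|f(r) - α e^r| ≤ e^{-r} (|f(0) - α| + C ∫_0^r e^{(3-m)t} dt)`.
The three regimes of `m` are the three growth behaviours of this last integral.
-/

open Real MeasureTheory Set

noncomputable def decayRate (m r : ℝ) : ℝ :=
  if m < 3 then exp ((2 - m) * r) else if m = 3 then (r + 1) * exp (-r) else exp (-r)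

theorem integral_exp_mul {c : ℝ} (hc : c ≠ 0) (a b : ℝ) :
    ∫ x in a..b, exp (c * x) = (exp (c * b) - exp (c * a)) / c := by
  rw [intervalIntegral.integral_comp_mul_left (fun x => exp x) hc, integral_exp, smul_eq_mul,
    inv_mul_eq_div]

theorem integrableOn_Ioi_of_abs_le_exp_mul {g : ℝ → ℝ} {C b r : ℝ} (hb : b < 0)
    (hg : AEStronglyMeasurable g (volume.restrict (Ioi r)))
    (hbound : ∀ s > r, |g s| ≤ C * exp (b * s)) : IntegrableOn g (Ioi r) :=
  ((integrableOn_exp_mul_Ioi hb r).const_mul C).mono' hg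
    (ae_restrict_of_forall_mem measurableSet_Ioi hbound)

theorem abs_integral_Ioi_le_of_abs_le_exp_mul {g : ℝ → ℝ} {C b r : ℝ} (hb : b < 0)
    (hbound : ∀ s > r, |g s| ≤ C * exp (b * s)) :
    |∫ s in Ioi r, g s| ≤ C * exp (b * r) / -b := by
  calc |∫ s in Ioi r, g s| ≤ ∫ s in Ioi r, C * exp (b * s) :=
        norm_integral_le_of_norm_le (f := g) ((integrableOn_exp_mul_Ioi hb r).const_mul C)
          (ae_restrict_of_forall_mem measurableSet_Ioi hbound)
    _ = C * exp (b * r) / -b := by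
        rw [integral_const_mul, integral_exp_mul_Ioi hb]; ring

theorem exp_mul_sub_mul_exp_sub_eq_integral {f : ℝ → ℝ} (hf : Differentiable ℝ f)
    (hf' : Continuous (deriv f)) (a r : ℝ) :
    exp r * (f r - a * exp r) - (f 0 - a) =
      ∫ t in (0:ℝ)..r, exp t * (deriv f t + f t - 2 * a * exp t) := by
  have hderiv : ∀ t ∈ uIcc 0 r, HasDerivAt (fun s => exp s * (f s - a * exp s))
      (exp t * (deriv f t + f t - 2 * a * exp t)) t := fun t _ =>
    ((hasDerivAt_exp t).mul ((hf t).hasDerivAt.sub ((hasDerivAt_exp t).const_mul a))).congr_deriv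
      (by simp only [Pi.sub_apply]; ring)
  have hfc := hf.continuous
  rw [intervalIntegral.integral_eq_sub_of_hasDerivAt hderiv
    (Continuous.intervalIntegrable (by fun_prop) _ _)]
  simp

theorem exp_neg_le_decayRate {m r : ℝ} (hr : 0 ≤ r) : exp (-r) ≤ decayRate m r := by
  unfold decayRate
  split_ifs with h3 h3'
  · exact exp_le_exp.mpr (by nlinarith)
  · nlinarith [exp_pos (-r)]
  · exact le_rfl

theorem exists_exp_neg_mul_integral_le_decayRate (m : ℝ) :
    ∃ B > 0, ∀ r ≥ 0, exp (-r) * ∫ t in (0:ℝ)..r, exp ((3 - m) * t) ≤ B * decayRate m r := by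
  rcases lt_trichotomy m 3 with h3 | rfl | h3
  · refine ⟨1 / (3 - m), one_div_pos.mpr (by linarith), fun r hr => ?_⟩
    have hexp : exp (-r) * exp ((3 - m) * r) = exp ((2 - m) * r) := by rw [← exp_add]; ring_nf
    rw [integral_exp_mul (by linarith), decayRate, if_pos h3, mul_zero, exp_zero,
      mul_div_assoc', mul_sub, hexp, mul_one, one_div_mul_eq_div]
    gcongr
    linarith [exp_pos (-r)]
  · refine ⟨1, one_pos, fun r hr => ?_⟩
    simp only [decayRate, lt_irrefl, if_false, if_true, sub_self, zero_mul,
      intervalIntegral.integral_const, sub_zero, smul_eq_mul, exp_zero, mul_one, one_mul]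
    nlinarith [exp_pos (-r)]
  · refine ⟨1 / (m - 3), one_div_pos.mpr (by linarith), fun r hr => ?_⟩
    rw [integral_exp_mul (by linarith), decayRate, if_neg h3.not_gt, if_neg h3.ne', mul_zero,
      exp_zero, mul_comm, ← neg_div_neg_eq, neg_sub, neg_sub]
    gcongr
    linarith [exp_pos ((3 - m) * r)]

section LinearEquation

variable {f h : ℝ → ℝ} {m K : ℝ}

noncomputable def leadingExpCoeff (f h : ℝ → ℝ) : ℝ :=
  1 / 2 * (f 0 + deriv f 0 + ∫ s in Ici (0:ℝ), exp (-s) * h s)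

theorem exp_neg_mul_deriv_add_eq (hf : Differentiable ℝ f) (hf' : Differentiable ℝ (deriv f))
    (hh : Continuous h) (hode : ∀ t ≥ 0, deriv (deriv f) t - f t = h t) {r : ℝ} (hr : 0 ≤ r) :
    exp (-r) * (deriv f r + f r) = deriv f 0 + f 0 + ∫ t in (0:ℝ)..r, exp (-t) * h t := by
  have hderiv : ∀ t ∈ uIcc 0 r,
      HasDerivAt (fun s => exp (-s) * (deriv f s + f s)) (exp (-t) * h t) t := by
    intro t ht
    rw [uIcc_of_le hr] at ht
    refine ((hasDerivAt_neg t).exp.mul ((hf' t).hasDerivAt.add (hf t).hasDerivAt)).congr_deriv ?_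
    rw [← hode t ht.1, Pi.add_apply]
    ring
  have hfc := hf.continuous
  have hfc' := hf'.continuous
  rw [intervalIntegral.integral_eq_sub_of_hasDerivAt hderiv
    (Continuous.intervalIntegrable (by fun_prop) _ _)]
  simp

theorem abs_exp_neg_mul_le (hbound : ∀ r ≥ 0, |h r| ≤ K * exp ((2 - m) * r)) {s : ℝ}
    (hs : 0 ≤ s) : |exp (-s) * h s| ≤ K * exp ((1 - m) * s) := by
  calc |exp (-s) * h s| = exp (-s) * |h s| := by rw [abs_mul, abs_exp]
    _ ≤ exp (-s) * (K * exp ((2 - m) * s)) := by gcongr; exact hbound s hs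
    _ = K * exp ((1 - m) * s) := by rw [mul_left_comm, ← exp_add]; ring_nf

theorem integrableOn_exp_neg_mul_Ioi (hm : 1 < m) (hh : Continuous h)
    (hbound : ∀ r ≥ 0, |h r| ≤ K * exp ((2 - m) * r)) {r : ℝ} (hr : 0 ≤ r) :
    IntegrableOn (fun s => exp (-s) * h s) (Ioi r) :=
  integrableOn_Ioi_of_abs_le_exp_mul (by linarith) (by fun_prop)
    fun s hs => abs_exp_neg_mul_le hbound (hr.trans hs.le)

theorem abs_integral_exp_neg_mul_Ioi_le (hm : 1 < m)
    (hbound : ∀ r ≥ 0, |h r| ≤ K * exp ((2 - m) * r)) {r : ℝ} (hr : 0 ≤ r) :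
    |∫ s in Ioi r, exp (-s) * h s| ≤ K / (m - 1) * exp ((1 - m) * r) := by
  have := abs_integral_Ioi_le_of_abs_le_exp_mul (by linarith : 1 - m < 0)
    fun s hs => abs_exp_neg_mul_le hbound (hr.trans hs.le)
  rwa [neg_sub, mul_div_right_comm] at this

theorem abs_exp_mul_deriv_add_sub_le (hm : 1 < m) (hf : Differentiable ℝ f)
    (hf' : Differentiable ℝ (deriv f)) (hh : Continuous h)
    (hbound : ∀ r ≥ 0, |h r| ≤ K * exp ((2 - m) * r))
    (hode : ∀ t ≥ 0, deriv (deriv f) t - f t = h t) {t : ℝ} (ht : 0 ≤ t) :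
    |exp t * (deriv f t + f t - 2 * leadingExpCoeff f h * exp t)| ≤
      K / (m - 1) * exp ((3 - m) * t) := by
  have htail : exp (-t) * (deriv f t + f t) - 2 * leadingExpCoeff f h =
      -∫ s in Ioi t, exp (-s) * h s := by
    rw [exp_neg_mul_deriv_add_eq hf hf' hh hode ht, leadingExpCoeff, integral_Ici_eq_integral_Ioi,
      ← intervalIntegral.integral_Ioi_sub_Ioi (integrableOn_exp_neg_mul_Ioi hm hh hbound le_rfl) ht]
    ring
  have hsplit : exp t * (deriv f t + f t - 2 * leadingExpCoeff f h * exp t) =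
      exp t * exp t * (exp (-t) * (deriv f t + f t) - 2 * leadingExpCoeff f h) := by
    rw [exp_neg]
    field_simp
  rw [hsplit, htail, abs_mul, abs_neg, abs_of_pos (by positivity)]
  calc exp t * exp t * |∫ s in Ioi t, exp (-s) * h s|
      ≤ exp t * exp t * (K / (m - 1) * exp ((1 - m) * t)) := by
        gcongr; exact abs_integral_exp_neg_mul_Ioi_le hm hbound ht
    _ = K / (m - 1) * exp ((3 - m) * t) := by
        rw [mul_left_comm, ← exp_add, ← exp_add]; ring_nf

theorem abs_sub_leadingExpCoeff_mul_exp_le (hm : 1 < m) (hf : ContDiff ℝ 2 f) (hh : Continuous h)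
    (hbound : ∀ r ≥ 0, |h r| ≤ K * exp ((2 - m) * r))
    (hode : ∀ t ≥ 0, deriv (deriv f) t - f t = h t) {r : ℝ} (hr : 0 ≤ r) :
    |f r - leadingExpCoeff f h * exp r| ≤ exp (-r) *
      (|f 0 - leadingExpCoeff f h| + K / (m - 1) * ∫ t in (0:ℝ)..r, exp ((3 - m) * t)) := by
  have hdf : Differentiable ℝ f := hf.differentiable (by norm_num)
  have hdf' : ContDiff ℝ 1 (deriv f) := hf.deriv'
  set α := leadingExpCoeff f h
  have hintegral : |∫ t in (0:ℝ)..r, exp t * (deriv f t + f t - 2 * α * exp t)| ≤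
      K / (m - 1) * ∫ t in (0:ℝ)..r, exp ((3 - m) * t) := by
    rw [← intervalIntegral.integral_const_mul, ← Real.norm_eq_abs]
    have hbound_cont : Continuous fun t => K / (m - 1) * exp ((3 - m) * t) := by fun_prop
    refine intervalIntegral.norm_integral_le_of_norm_le hr
      (ae_of_all volume fun t ht => ?_) (hbound_cont.intervalIntegrable _ _)
    exact abs_exp_mul_deriv_add_sub_le hm hdf (hdf'.differentiable one_ne_zero) hh hbound hode
      ht.1.le
  calc |f r - α * exp r| = exp (-r) * |(f 0 - α) + (exp r * (f r - α * exp r) - (f 0 - α))| := by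
        rw [add_sub_cancel, abs_mul, abs_exp, ← mul_assoc, ← exp_add, neg_add_cancel, exp_zero,
          one_mul]
    _ ≤ exp (-r) * (|f 0 - α| + K / (m - 1) * ∫ t in (0:ℝ)..r, exp ((3 - m) * t)) := by
        rw [exp_mul_sub_mul_exp_sub_eq_integral hdf hdf'.continuous]
        gcongr
        exact (abs_add_le _ _).trans (add_le_add_right hintegral _)

end LinearEquation

/-- The analytic core of Proposition 4.5 of the paper: if `f'' - f = h` on `[0,∞)` with
`|h(r)| ≤ K e^{(2-m)r}`, `m > 1`, then `f(r) - α e^r` decays with explicit rate, where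
`α = (1/2)(f(0) + f'(0) + ∫₀^∞ e^{-s} h(s) ds)`, with a constant depending only on
`K`, `m`, `|f(0)|` and `|f'(0)|`. -/
theorem stmt5 (m K F0 F1 : ℝ) (hm : 1 < m) (hK : 0 < K) :
    ∃ c > (0:ℝ), ∀ f h : ℝ → ℝ, ContDiff ℝ 2 f → Continuous h →
      (∀ r ≥ (0:ℝ), |h r| ≤ K * Real.exp ((2 - m) * r)) →
      (∀ r ≥ (0:ℝ), deriv (deriv f) r - f r = h r) →
      |f 0| ≤ F0 → |deriv f 0| ≤ F1 →
      IntegrableOn (fun s => Real.exp (-s) * h s) (Set.Ici (0:ℝ)) ∧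
      ∀ r ≥ (0:ℝ),
        |f r - (1 / 2 * (f 0 + deriv f 0 + ∫ s in Set.Ici (0:ℝ), Real.exp (-s) * h s)) *
            Real.exp r| ≤
          c * (if m < 3 then Real.exp ((2 - m) * r)
               else if m = 3 then (r + 1) * Real.exp (-r)
               else Real.exp (-r)) := by
  obtain ⟨B, hB, hintegral⟩ := exists_exp_neg_mul_integral_le_decayRate m
  have hm1 : 0 < m - 1 := by linarith
  refine ⟨(|F0| + |F1| + K / (m - 1)) / 2 + K / (m - 1) * B, by positivity,
    fun f h hf hh hbound hode hF0 hF1 => ⟨?_, fun r hr => ?_⟩⟩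
  · rw [integrableOn_Ici_iff_integrableOn_Ioi]
    exact integrableOn_exp_neg_mul_Ioi hm hh hbound le_rfl
  have hcoeff : |f 0 - leadingExpCoeff f h| ≤ (|F0| + |F1| + K / (m - 1)) / 2 := by
    have hI := abs_integral_exp_neg_mul_Ioi_le hm hbound le_rfl
    rw [mul_zero, exp_zero, mul_one, ← integral_Ici_eq_integral_Ioi] at hI
    rw [abs_le] at hF0 hF1 hI
    rw [leadingExpCoeff, abs_le]
    constructor <;> linarith [le_abs_self F0, le_abs_self F1]
  calc |f r - leadingExpCoeff f h * exp r|
      ≤ exp (-r) * (|f 0 - leadingExpCoeff f h| +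
          K / (m - 1) * ∫ t in (0:ℝ)..r, exp ((3 - m) * t)) :=
        abs_sub_leadingExpCoeff_mul_exp_le hm hf hh hbound hode hr
    _ = |f 0 - leadingExpCoeff f h| * exp (-r) +
          K / (m - 1) * (exp (-r) * ∫ t in (0:ℝ)..r, exp ((3 - m) * t)) := by ring
    _ ≤ (|F0| + |F1| + K / (m - 1)) / 2 * decayRate m r + K / (m - 1) * (B * decayRate m r) :=
        add_le_add (mul_le_mul hcoeff (exp_neg_le_decayRate hr) (exp_pos _).le (by positivity))
          (mul_le_mul_of_nonneg_left (hintegral r hr) (by positivity))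
    _ = _ := by rw [decayRate]; ring
end

section
/- Let V be a real inner product space equipped with a compatible complex structure J (a linear map with J∘J = −id and ⟨Jx, Jy⟩ = ⟨x, y⟩ for all x, y), and let R⁰ be defined by R⁰(X,Y,Z,T) = (1/4)(⟨X,T⟩⟨Y,Z⟩ − ⟨X,Z⟩⟨Y,T⟩ + ⟨X,JT⟩⟨Y,JZ⟩ − ⟨X,JZ⟩⟨Y,JT⟩ + 2⟨X,JY⟩⟨T,JZ⟩). Let n ∈ V be a unit vector, let e ∈ V satisfy ⟨e,n⟩ = 0 and ⟨e,Jn⟩ = 0, let a, b ∈ V satisfy ⟨a,n⟩ = ⟨b,n⟩ = 0, let w ∈ V be arbitrary, and let q ∈ V satisfy ⟨q, Jn⟩ = ⟨a, Je⟩. Then R⁰(n, e, b, a) − R⁰(n, b, a, e) − R⁰(n, w, n, e) − R⁰(n, b, n, q) = (1/4)(⟨w, e⟩ + ⟨b, q⟩). -/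
open scoped InnerProductSpace

/-- The key cancellation in the proof of Proposition 4.9 of the paper:
`R⁰(n,e,b,a) - R⁰(n,b,a,e) - R⁰(n,w,n,e) - R⁰(n,b,n,q) = (1/4)(⟨w,e⟩ + ⟨b,q⟩)`
whenever `e ⊥ n`, `e ⊥ Jn`, `a, b ⊥ n` and `⟨q,Jn⟩ = ⟨a,Je⟩`. -/
theorem stmt12 {V : Type*} [NormedAddCommGroup V] [InnerProductSpace ℝ V]
    (J : V →ₗ[ℝ] V) (hJ2 : ∀ x, J (J x) = -x)
    (hJi : ∀ x y : V, ⟪J x, J y⟫_ℝ = ⟪x, y⟫_ℝ)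
    (R0 : V → V → V → V → ℝ)
    (hR0 : ∀ X Y Z T : V, R0 X Y Z T =
      (1 / 4) * (⟪X, T⟫_ℝ * ⟪Y, Z⟫_ℝ - ⟪X, Z⟫_ℝ * ⟪Y, T⟫_ℝ
        + ⟪X, J T⟫_ℝ * ⟪Y, J Z⟫_ℝ - ⟪X, J Z⟫_ℝ * ⟪Y, J T⟫_ℝ
        + 2 * ⟪X, J Y⟫_ℝ * ⟪T, J Z⟫_ℝ))
    (n : V) (hn : ‖n‖ = 1)
    (e : V) (hen : ⟪e, n⟫_ℝ = 0) (heJn : ⟪e, J n⟫_ℝ = 0)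
    (a b : V) (han : ⟪a, n⟫_ℝ = 0) (hbn : ⟪b, n⟫_ℝ = 0)
    (w q : V) (hq : ⟪q, J n⟫_ℝ = ⟪a, J e⟫_ℝ) :
    R0 n e b a - R0 n b a e - R0 n w n e - R0 n b n q
      = (1 / 4) * (⟪w, e⟫_ℝ + ⟪b, q⟫_ℝ) := by
  have hskew : ∀ x y : V, ⟪x, J y⟫_ℝ = -⟪J x, y⟫_ℝ := by
    intro x y
    rw [← hJi x (J y), hJ2, inner_neg_right]
  have hnn : ⟪n, n⟫_ℝ = (1 : ℝ) := by
    rw [real_inner_self_eq_norm_sq, hn]; norm_num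
  have hnJn : ⟪n, J n⟫_ℝ = 0 := by
    have h1 := hskew n n
    have h2 := real_inner_comm n (J n)
    linarith
  have hna : ⟪n, a⟫_ℝ = 0 := by rw [real_inner_comm]; exact han
  have hnb : ⟪n, b⟫_ℝ = 0 := by rw [real_inner_comm]; exact hbn
  have hne : ⟪n, e⟫_ℝ = 0 := by rw [real_inner_comm]; exact hen
  have hnJe : ⟪n, J e⟫_ℝ = 0 := by
    rw [hskew, real_inner_comm, heJn, neg_zero]
  have heJb : ⟪e, J b⟫_ℝ = -⟪b, J e⟫_ℝ := by rw [hskew, real_inner_comm]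
  have heJa : ⟪e, J a⟫_ℝ = -⟪a, J e⟫_ℝ := by rw [hskew, real_inner_comm]
  have hnJq : ⟪n, J q⟫_ℝ = -⟪a, J e⟫_ℝ := by
    rw [hskew, real_inner_comm, hq]
  have hbJn : ⟪b, J n⟫_ℝ = -⟪n, J b⟫_ℝ := by rw [hskew, real_inner_comm]
  simp only [hR0, hna, hnb, hne, hnn, hnJn, hnJe, heJn, heJb, heJa, hnJq, hbJn, hbn, hq]
  ring
end
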